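/- Let F be a totally real number field and (w_τ)_{τ∈Σ_∞} ∈ ℤ^{Σ_∞} a tuple of integers indexed by the archimedean places of F. If the group homomorphism O_F^× → ℂ^×, a ↦ ∏_{τ∈Σ_∞} τ(a)^{w_τ}, has finite order (equivalently, finite image), then w_τ is independent of τ, i.e. there is w ∈ ℤ with w_τ = w for all τ ∈ Σ_∞. -/

import Mathlib

/-!
Since the image is finite, every value `∏_τ τ(u)^{w_τ}` is a root of unity, so
`∑_τ w_τ log|τ(u)| = 0` for every unit `u`. For a totally real field the embeddings are the
infinite places, all of multiplicity one, so the functional `x ↦ ∑_v w_v x_v` vanishes on the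
logarithmic image of the units. By Dirichlet's unit theorem that image spans the hyperplane
`∑_v x_v = 0`, and the only functionals vanishing on this hyperplane are multiples of the sum,
i.e. have constant coefficients.
-/

open NumberField NumberField.InfinitePlace NumberField.Units NumberField.Units.dirichletUnitTheorem

theorem MonoidHom.isOfFinOrder_of_finite_range {G M : Type*} [Group G] [Monoid M] (φ : G →* M)
    (h : (Set.range φ).Finite) (g : G) : IsOfFinOrder (φ g) := by
  have hu : (Set.range φ.toHomUnits).Finite :=
    (h.preimage Units.val_injective.injOn).subset <| by
      rintro _ ⟨x, rfl⟩
      exact ⟨x, rfl⟩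
  have hg : IsOfFinOrder (φ.toHomUnits g) :=
    finite_powers.mp <| hu.subset <| by
      rintro _ ⟨n, rfl⟩
      exact ⟨g ^ n, map_pow _ _ _⟩
  exact (Units.coeHom M).isOfFinOrder hg

section

variable {K : Type*} [Field K] [NumberField K]

theorem NumberField.Units.apply_eq_apply_w₀_of_sum_mul_mult_log_eq_zero
    (c : InfinitePlace K → ℝ)
    (hc : ∀ u : (𝓞 K)ˣ, ∑ v, c v * (mult v * Real.log (v u)) = 0) (v : InfinitePlace K) :
    c v = c w₀ := by
  classical
  let L : logSpace K →ₗ[ℝ] ℝ := Fintype.linearCombination ℝ fun v' => c v' - c w₀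
  have hL : L = 0 := by
    refine LinearMap.ext_on (unitLattice_span_eq_top K) ?_
    rintro _ ⟨x, -, rfl⟩
    obtain ⟨u, rfl⟩ : ∃ u, Additive.ofMul u = x := ⟨x.toMul, rfl⟩
    have hsum := hc u
    rw [Fintype.sum_eq_add_sum_subtype_ne _ w₀] at hsum
    have hw₀ := sum_logEmbedding_component u
    simp only [logEmbedding_component] at hw₀
    simp only [L, AddMonoidHom.coe_toIntLinearMap, logEmbedding_component, LinearMap.zero_apply,
      Fintype.linearCombination_apply, smul_eq_mul, mul_sub, Finset.sum_sub_distrib,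
      ← Finset.sum_mul, hw₀]
    simp only [mul_comm (c _)] at hsum
    linear_combination hsum
  by_cases hv : v = w₀
  · rw [hv]
  · simpa [L, sub_eq_zero] using LinearMap.congr_fun hL (Pi.single ⟨v, hv⟩ 1)

variable (K) in
noncomputable def NumberField.Units.weightedEmbeddingProd (w : (K →+* ℂ) → ℤ) :
    (𝓞 K)ˣ →* ℂ where
  toFun a := ∏ τ : K →+* ℂ, (τ (algebraMap (𝓞 K) K (a : 𝓞 K))) ^ (w τ)
  map_one' := by simp
  map_mul' a b := by simp [mul_zpow, Finset.prod_mul_distrib]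

theorem NumberField.Units.log_norm_weightedEmbeddingProd (w : (K →+* ℂ) → ℤ)
    (u : (𝓞 K)ˣ) :
    Real.log ‖weightedEmbeddingProd K w u‖ = ∑ τ : K →+* ℂ, w τ * Real.log ‖τ u‖ := by
  have hτu (τ : K →+* ℂ) : ‖τ u‖ ^ w τ ≠ 0 := zpow_ne_zero _ (by simp)
  simp only [weightedEmbeddingProd, MonoidHom.coe_mk, OneHom.coe_mk, norm_prod, norm_zpow]
  rw [Real.log_prod fun τ _ => hτu τ]
  simp only [Real.log_zpow]

theorem NumberField.sum_embeddings_eq_sum_infinitePlace {M : Type*} [AddCommMonoid M]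
    (hreal : ∀ φ : K →+* ℂ, ComplexEmbedding.IsReal φ) (g : (K →+* ℂ) → M) :
    ∑ φ, g φ = ∑ v : InfinitePlace K, g v.embedding :=
  (Fintype.sum_bijective _ ⟨embedding_injective K,
    fun φ => ⟨InfinitePlace.mk φ, embedding_mk_eq_of_isReal (hreal φ)⟩⟩ _ _ fun _ => rfl).symm

end

/-- Let `F` be a totally real number field (every complex embedding of `F` is real)
and `(w_τ)_{τ ∈ Σ_∞} ∈ ℤ^{Σ_∞}` a tuple of integers indexed by the archimedean places
of `F`, regarded as the embeddings `τ : F →+* ℂ` (all of which are real).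
If the group homomorphism `𝒪_F^× → ℂ^×`, `a ↦ ∏_{τ ∈ Σ_∞} τ(a)^{w_τ}`, has finite
order — equivalently, finite image — then `w_τ` is independent of `τ`: there is
`w ∈ ℤ` with `w_τ = w` for all `τ ∈ Σ_∞`. -/
theorem constant_exponents_of_finite_image
    (F : Type*) [Field F] [NumberField F]
    (htotallyReal : ∀ φ : F →+* ℂ, NumberField.ComplexEmbedding.IsReal φ)
    (w : (F →+* ℂ) → ℤ)
    (hfin : (Set.range fun a : (NumberField.RingOfIntegers F)ˣ =>
        ∏ τ : F →+* ℂ,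
          (τ (algebraMap (NumberField.RingOfIntegers F) F
            ((a : (NumberField.RingOfIntegers F)ˣ) : NumberField.RingOfIntegers F))) ^ (w τ)).Finite) :
    ∃ w0 : ℤ, ∀ τ : F →+* ℂ, w τ = w0 := by
  have hlog (u : (𝓞 F)ˣ) : ∑ τ : F →+* ℂ, w τ * Real.log ‖τ u‖ = 0 := by
    rw [← log_norm_weightedEmbeddingProd,
      ((weightedEmbeddingProd F w).isOfFinOrder_of_finite_range hfin u).norm_eq_one, Real.log_one]
  have hplaces (u : (𝓞 F)ˣ) :
      ∑ v : InfinitePlace F, (w v.embedding : ℝ) * (mult v * Real.log (v u)) = 0 := by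
    rw [← hlog u, sum_embeddings_eq_sum_infinitePlace htotallyReal]
    refine Finset.sum_congr rfl fun v _ => ?_
    rw [(isReal_iff.mpr (htotallyReal _)).mult_eq_one, norm_embedding_eq]
    push_cast
    ring
  refine ⟨w w₀.embedding, fun τ => ?_⟩
  rw [← embedding_mk_eq_of_isReal (htotallyReal τ)]
  exact_mod_cast
    apply_eq_apply_w₀_of_sum_mul_mult_log_eq_zero _ hplaces (InfinitePlace.mk τ)
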